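/- arXiv:1802.04856 — 2 statements merged into one kernel-verified Lean document; each statement's English description precedes it below -/
import Mathlib

section
/- Let λ = (λ_1,...,λ_r) be a partition of n and let ε^λ be the induced sign character of S_n (the character of the sign representation of the Young subgroup S_λ induced to S_n). Then for every w ∈ S_n, ε^λ(w) = (-1)^{inv(w)} · |R(w,λ)|, where R(w,λ) is the set of labelings of the cycles of w by labels in {1,...,r} such that for each i, the cycles labeled i contain a total of exactly λ_i letters. -/
noncomputable section

attribute [local instance] Classical.propDecidable

/-- The index of the block of the composition `l` containing position `i`
(positions and blocks indexed from `0`). -/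
def blk (l : List ℕ) (i : ℕ) : ℕ :=
  ((List.range l.length).filter fun k => (l.take (k + 1)).sum ≤ i).length

/-- The Young subgroup `S_λ ≤ S_n`: permutations preserving each block of `λ`. -/
def young (n : ℕ) (l : List ℕ) : Finset (Equiv.Perm (Fin n)) :=
  Finset.univ.filter fun g => ∀ i : Fin n, blk l (g i : ℕ) = blk l (i : ℕ)

/-!
Let `b : Fin n → Fin r` send each letter to the index of its block, and let `S_n` act on
labelings `f : Fin n → Fin r` by `g • f = f ∘ g⁻¹`. The Young subgroup `S_λ` is the stabilizer
of `b`, and the orbit of `b` consists of the labelings whose fibres have sizes `λ_1, …, λ_r`.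
Now `g⁻¹ w g` fixes `b` iff `w` fixes `g • b`, and every labeling in the orbit equals `g • b`
for exactly `|S_λ|` elements `g`; hence the number of `g` with `g⁻¹ w g ∈ S_λ` is `|S_λ|` times
the number of `w`-invariant labelings in the orbit, i.e. of labelings constant on the cycles of
`w` with fibres of sizes `λ_i`. For each such `g`, `sign (g⁻¹ w g) = sign w = (-1)^{inv(w)}`.
-/

open Finset

namespace Equiv.Perm

theorem sign_eq_signAux {n : ℕ} (w : Perm (Fin n)) : sign w = signAux w := by
  induction w using swap_induction_on with
  | one => simp
  | swap_mul w x y hxy ih => rw [sign_mul, signAux_mul, sign_swap hxy, signAux_swap hxy, ih]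

theorem sign_eq_neg_one_pow_card_inversions {n : ℕ} (w : Perm (Fin n)) :
    sign w = (-1) ^ #{p : Fin n × Fin n | p.1 < p.2 ∧ w p.2 < w p.1} := by
  rw [sign_eq_signAux, signAux, prod_ite, prod_const, prod_const, one_pow, mul_one]
  congr 1
  refine card_nbij' (fun p => (p.2, p.1)) (fun p => ⟨p.2, p.1⟩) ?_ ?_
    (fun _ _ => rfl) (fun _ _ => rfl)
  · intro p hp
    simp only [coe_filter, mem_finPairsLT, Set.mem_ofPred_eq, mem_univ, true_and] at hp ⊢
    exact ⟨hp.1, hp.2.lt_of_ne fun h => hp.1.ne' (w.injective h)⟩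
  · intro p hp
    simp only [coe_filter, mem_finPairsLT, Set.mem_ofPred_eq, mem_univ, true_and] at hp ⊢
    exact ⟨hp.1, hp.2.le⟩

theorem sign_conj {α : Type*} [DecidableEq α] [Fintype α] (g w : Perm α) :
    sign (g⁻¹ * w * g) = sign w := by
  rw [map_mul, map_mul, sign_inv, mul_right_comm, Int.units_mul_self, one_mul]

end Equiv.Perm

section Blocks

variable {l : List ℕ} {i k : ℕ}

theorem lt_length_of_mem_Ico_sum_take (h : i ∈ Ico (l.take k).sum (l.take (k + 1)).sum) :
    k < l.length := by
  by_contra! hk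
  rw [List.take_of_length_le hk, List.take_of_length_le (by omega), Ico_self] at h
  exact notMem_empty i h

theorem blk_eq_of_mem_Ico_sum_take (h : i ∈ Ico (l.take k).sum (l.take (k + 1)).sum) :
    blk l i = k := by
  have hk := lt_length_of_mem_Ico_sum_take h
  obtain ⟨h₁, h₂⟩ := mem_Ico.1 h
  have hmem : ∀ j, (l.take (j + 1)).sum ≤ i ↔ j < k := by
    refine fun j => ⟨fun hj => ?_, fun hj => (l.monotone_sum_take hj).trans h₁⟩
    by_contra! hkj
    have : (l.take (k + 1)).sum ≤ (l.take (j + 1)).sum := l.monotone_sum_take (by omega)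
    omega
  change #{j ∈ range l.length | (l.take (j + 1)).sum ≤ i} = k
  simp_rw [hmem]
  rw [show {j ∈ range l.length | j < k} = range k by ext; simp; omega, card_range]

theorem exists_mem_Ico_sum_take (hi : i < l.sum) :
    ∃ k, i ∈ Ico (l.take k).sum (l.take (k + 1)).sum := by
  have hex : ∃ k, i < (l.take (k + 1)).sum :=
    ⟨l.length, by rwa [List.take_of_length_le (by omega)]⟩
  refine ⟨Nat.find hex, mem_Ico.2 ⟨?_, Nat.find_spec hex⟩⟩
  obtain h | h := Nat.eq_zero_or_eq_succ_pred (Nat.find hex)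
  · simp [h]
  · rw [h]
    exact not_lt.1 (Nat.find_min hex (by omega))

theorem blk_eq_iff (hi : i < l.sum) :
    blk l i = k ↔ i ∈ Ico (l.take k).sum (l.take (k + 1)).sum := by
  refine ⟨fun h => ?_, blk_eq_of_mem_Ico_sum_take⟩
  obtain ⟨k', hk'⟩ := exists_mem_Ico_sum_take hi
  rwa [← h, blk_eq_of_mem_Ico_sum_take hk']

theorem blk_lt_length (hi : i < l.sum) : blk l i < l.length := by
  obtain ⟨k, hk⟩ := exists_mem_Ico_sum_take hi
  rw [blk_eq_of_mem_Ico_sum_take hk]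
  exact lt_length_of_mem_Ico_sum_take hk

theorem card_filter_blk_eq {n : ℕ} (hsum : l.sum = n) (k : Fin l.length) :
    #{x : Fin n | blk l x = k} = l.get k := by
  have hmap : ({x : Fin n | blk l x = k} : Finset _).map Fin.valEmbedding =
      Ico (l.take k).sum (l.take (k + 1)).sum := by
    ext i
    simp only [mem_map, mem_filter, mem_univ, true_and, Fin.valEmbedding_apply]
    refine ⟨fun ⟨x, hx, hxi⟩ => hxi ▸ (blk_eq_iff (hsum ▸ x.isLt)).1 hx, fun hi => ?_⟩
    have hin : i < n := hsum ▸ (mem_Ico.1 hi).2.trans_le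
      ((List.take_prefix _ l).sublist.sum_le_sum fun _ _ => Nat.zero_le _)
    exact ⟨⟨i, hin⟩, (blk_eq_iff (hsum ▸ hin)).2 hi, rfl⟩
  rw [← card_map, hmap, Nat.card_Ico, List.sum_take_succ _ _ k.isLt, Nat.add_sub_cancel_left,
    List.get_eq_getElem]

end Blocks

namespace MulAction

variable {G X : Type*} [Group G] [MulAction G X]

theorem conj_mem_stabilizer_iff {x : X} {g w : G} :
    g⁻¹ * w * g ∈ stabilizer G x ↔ w • g • x = g • x := by
  rw [mem_stabilizer_iff, mul_smul, mul_smul, inv_smul_eq_iff]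

theorem card_filter_smul_eq [Fintype G] [DecidableEq X] {x y : X} (hy : y ∈ orbit G x) :
    #{g : G | g • x = y} = Nat.card (stabilizer G x) := by
  obtain ⟨g₀, rfl⟩ := hy
  have hstab : Nat.card (stabilizer G x) = #{h : G | h • x = x} := by
    simp [Nat.card_eq_fintype_card, Fintype.card_subtype]
  rw [hstab]
  refine card_nbij' (g₀⁻¹ * ·) (g₀ * ·) ?_ ?_ (fun _ _ => by simp) (fun _ _ => by simp)
  · intro g hg
    simp only [coe_filter, mem_univ, true_and, Set.mem_ofPred_eq] at hg ⊢
    rw [mul_smul, hg, inv_smul_smul]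
  · intro h hh
    simp only [coe_filter, mem_univ, true_and, Set.mem_ofPred_eq] at hh ⊢
    rw [mul_smul, hh]

theorem card_filter_conj_mem_stabilizer [Fintype G] [Fintype X] [DecidableEq X] (x : X) (w : G) :
    #{g : G | g⁻¹ * w * g ∈ stabilizer G x} =
      Nat.card (stabilizer G x) * #{y : X | y ∈ orbit G x ∧ w • y = y} := by
  rw [card_eq_sum_card_fiberwise (f := (· • x)) (t := {y : X | y ∈ orbit G x ∧ w • y = y})
    fun g hg => by simpa using conj_mem_stabilizer_iff.1 (mem_filter.1 hg).2,
    sum_const_nat fun y hy => ?_, mul_comm]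
  rw [filter_filter, ← card_filter_smul_eq (mem_filter.1 hy).2.1]
  congr 1
  ext g
  simp only [mem_filter, mem_univ, true_and, and_iff_right_iff_imp, conj_mem_stabilizer_iff]
  rintro rfl
  exact (mem_filter.1 hy).2.2

end MulAction

section Labelings

attribute [local instance] arrowAction

open MulAction

variable {α ι : Type*}

@[simp]
theorem Equiv.Perm.smul_arrow_apply (g : Equiv.Perm α) (f : α → ι) (x : α) :
    (g • f) x = f (g⁻¹ x) :=
  rfl

theorem mem_stabilizer_perm_arrow_iff {b : α → ι} {g : Equiv.Perm α} :
    g ∈ stabilizer (Equiv.Perm α) b ↔ ∀ x, b (g x) = b x := by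
  simp only [mem_stabilizer_iff, funext_iff, Equiv.Perm.smul_arrow_apply]
  refine ⟨fun h x => ?_, fun h x => ?_⟩
  · simpa using (h (g x)).symm
  · simpa using (h (g⁻¹ x)).symm

theorem Equiv.Perm.smul_eq_self_iff_forall_sameCycle {w : Equiv.Perm α} {f : α → ι} :
    w • f = f ↔ ∀ x y, w.SameCycle x y → f x = f y := by
  refine ⟨fun h x y hxy => ?_, fun h => funext fun x => h _ _ ⟨1, by simp⟩⟩
  obtain ⟨k, rfl⟩ := hxy
  have hfix := congrFun (mem_fixedBy_zpow (show f ∈ fixedBy (α → ι) w from h) k) ((w ^ k) x)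
  simpa using hfix

theorem mem_orbit_perm_arrow_iff [Fintype α] [DecidableEq ι] {b f : α → ι} :
    f ∈ orbit (Equiv.Perm α) b ↔ ∀ i, #{x | f x = i} = #{x | b x = i} := by
  constructor
  · rintro ⟨g, rfl⟩ i
    exact card_nbij' (g⁻¹ ·) (g ·) (fun _ hx => by simpa using hx) (fun _ hx => by simpa using hx)
      (fun _ _ => by simp) (fun _ _ => by simp)
  · intro h
    let e := Equiv.ofFiberEquiv fun i => Fintype.equivOfCardEq (by
      simp only [Fintype.card_subtype]
      exact h i : Fintype.card {x // f x = i} = Fintype.card {x // b x = i})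
    exact ⟨e⁻¹, funext fun x => by
      change b (e⁻¹⁻¹ x) = f x
      rw [inv_inv]
      exact Equiv.ofFiberEquiv_map _ x⟩

variable {n : ℕ} {l : List ℕ}

def blockLabel (hsum : l.sum = n) (x : Fin n) : Fin l.length :=
  ⟨blk l x, blk_lt_length (by omega)⟩

theorem card_filter_blockLabel_eq (hsum : l.sum = n) (k : Fin l.length) :
    #{x | blockLabel hsum x = k} = l.get k := by
  simp only [blockLabel, Fin.ext_iff]
  exact card_filter_blk_eq hsum k

theorem mem_young_iff_mem_stabilizer (hsum : l.sum = n) {g : Equiv.Perm (Fin n)} :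
    g ∈ young n l ↔ g ∈ stabilizer (Equiv.Perm (Fin n)) (blockLabel hsum) := by
  rw [mem_stabilizer_perm_arrow_iff]
  simp [young, blockLabel, Fin.ext_iff]

theorem card_young (hsum : l.sum = n) :
    #(young n l) = Nat.card (stabilizer (Equiv.Perm (Fin n)) (blockLabel hsum)) := by
  simp [Nat.card_eq_fintype_card, Fintype.card_subtype, ← mem_young_iff_mem_stabilizer hsum]

theorem card_filter_conj_mem_young (hsum : l.sum = n) (w : Equiv.Perm (Fin n)) :
    #{g | g⁻¹ * w * g ∈ young n l} = #(young n l) * #{f : Fin n → Fin l.length |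
      (∀ x y, w.SameCycle x y → f x = f y) ∧ ∀ i, #{x | f x = i} = l.get i} := by
  have hlabel : ∀ f : Fin n → Fin l.length,
      f ∈ orbit (Equiv.Perm (Fin n)) (blockLabel hsum) ∧ w • f = f ↔
        (∀ x y, w.SameCycle x y → f x = f y) ∧ ∀ i, #{x | f x = i} = l.get i := fun f => by
    rw [mem_orbit_perm_arrow_iff, Equiv.Perm.smul_eq_self_iff_forall_sameCycle, and_comm]
    simp only [card_filter_blockLabel_eq]
  simp only [mem_young_iff_mem_stabilizer hsum]
  rw [card_young hsum, ← filter_congr fun f _ => hlabel f]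
  exact card_filter_conj_mem_stabilizer _ w

end Labelings

theorem induced_sign_char_eval_general {n : ℕ} (l : List ℕ)
    (hsum : l.sum = n)
    (w : Equiv.Perm (Fin n)) :
    (∑ g : Equiv.Perm (Fin n),
        if g⁻¹ * w * g ∈ young n l
        then ((Equiv.Perm.sign (g⁻¹ * w * g) : ℤ) : ℚ) else 0) /
      ((young n l).card : ℚ)
    = (-1) ^ ((Finset.univ.filter
          fun p : Fin n × Fin n => p.1 < p.2 ∧ w p.2 < w p.1).card) *
      (((Finset.univ.filter fun f : Fin n → Fin l.length =>
          (∀ x y : Fin n, w.SameCycle x y → f x = f y) ∧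
          ∀ i : Fin l.length,
            (Finset.univ.filter fun x => f x = i).card = l.get i).card : ℚ)) := by
  have hyoung : (#(young n l) : ℚ) ≠ 0 :=
    Nat.cast_ne_zero.2 (card_pos.2 ⟨1, by simp [young]⟩).ne'
  simp only [Equiv.Perm.sign_conj]
  rw [← sum_filter, sum_const, nsmul_eq_mul, card_filter_conj_mem_young hsum,
    Equiv.Perm.sign_eq_neg_one_pow_card_inversions]
  push_cast
  field_simp

/-- The induced sign character `ε^λ = Ind_{S_λ}^{S_n}(sgn)`, via the induced
character formula, evaluated at `w` equals `(-1)^{inv(w)}` times the number of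
labelings of the cycles of `w` by `{1,…,r}` such that the cycles labeled `i`
contain exactly `λ_i` letters in total. -/
theorem induced_sign_char_eval {n : ℕ} (l : List ℕ)
    (hpos : ∀ x ∈ l, 0 < x) (hsort : l.Pairwise (· ≥ ·)) (hsum : l.sum = n)
    (w : Equiv.Perm (Fin n)) :
    (∑ g : Equiv.Perm (Fin n),
        if g⁻¹ * w * g ∈ young n l
        then ((Equiv.Perm.sign (g⁻¹ * w * g) : ℤ) : ℚ) else 0) /
      ((young n l).card : ℚ)
    = (-1) ^ ((Finset.univ.filter
          fun p : Fin n × Fin n => p.1 < p.2 ∧ w p.2 < w p.1).card) *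
      (((Finset.univ.filter fun f : Fin n → Fin l.length =>
          (∀ x y : Fin n, w.SameCycle x y → f x = f y) ∧
          ∀ i : Fin l.length,
            (Finset.univ.filter fun x => f x = i).card = l.get i).card : ℚ)) :=
  induced_sign_char_eval_general l hsum w
end
end

section
/- Let G be the wiring diagram of an expression s_{i_1} ⋯ s_{i_m} in S_n (the concatenation of the m elementary diagrams G_{[i_j, i_j+1]}). Then the number of bijective path families covering G (each edge used exactly once) is exactly 2^m, and if s_{i_1} ⋯ s_{i_m} is a reduced expression for v, then there is a unique covering path family of type v, namely the one in which all m indices are crossings. -/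
noncomputable section

attribute [local instance] Classical.propDecidable

/-- The adjacent transposition `s_{i+1}` swapping `i` and `i+1` in `S_{n+1}`. -/
def adjT {n : ℕ} (i : Fin n) : Equiv.Perm (Fin (n + 1)) :=
  Equiv.swap i.castSucc i.succ

/-- Coxeter length: minimal number of adjacent transpositions whose product is `w`. -/
def len {m : ℕ} (w : Equiv.Perm (Fin m)) : ℕ :=
  sInf {k | ∃ l : List (Equiv.Perm (Fin m)), l.length = k ∧
    (∀ s ∈ l, ∃ p : Fin m × Fin m, (p.1 : ℕ) + 1 = (p.2 : ℕ) ∧ s = Equiv.swap p.1 p.2) ∧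
    l.prod = w}

/-- Product of the word of generators given by a list of indices. -/
def wordProd {n : ℕ} (l : List (Fin n)) : Equiv.Perm (Fin (n + 1)) :=
  (l.map adjT).prod

/-- `l` is a reduced word for `w`. -/
def IsRedWord {n : ℕ} (l : List (Fin n)) (w : Equiv.Perm (Fin (n + 1))) : Prop :=
  wordProd l = w ∧ l.length = len w

/-- Bruhat order. -/
def BruhatLE {n : ℕ} (u v : Equiv.Perm (Fin (n + 1))) : Prop :=
  ∀ l : List (Fin n), IsRedWord l v → ∃ l' : List (Fin n), l'.Sublist l ∧ IsRedWord l' u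

/-- Left weak order. -/
def WeakLE {n : ℕ} (t u : Equiv.Perm (Fin (n + 1))) : Prop :=
  len u = len (u * t⁻¹) + len t

/-- The base ring `ℤ[q^{1/2}, q^{-1/2}]`, with `T 1 = q^{1/2}`. -/
abbrev A := LaurentPolynomial ℤ

def qh : A := LaurentPolynomial.T 1
def qhi : A := LaurentPolynomial.T (-1)
def qq : A := LaurentPolynomial.T 2

/-- A (bijective) path family covering the wiring diagram of the word `l`,
encoded by the sequence of level assignments `P t : source → level`:
`P 0 = 1`, and at the `j`-th central vertex the two incident wires either cross
or do not cross. Its type is `(P last)⁻¹`, sending each source to its sink. -/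
def PathFam {n : ℕ} (l : List (Fin n))
    (P : Fin (l.length + 1) → Equiv.Perm (Fin (n + 1))) : Prop :=
  P 0 = 1 ∧ ∀ j : Fin l.length,
    P j.succ = adjT (l.get j) * P j.castSucc ∨ P j.succ = P j.castSucc

/-- The type of a covering path family: source `i` is joined to sink `(P last)⁻¹ i`. -/
def famType {n : ℕ} (l : List (Fin n))
    (P : Fin (l.length + 1) → Equiv.Perm (Fin (n + 1))) : Equiv.Perm (Fin (n + 1)) :=
  (P (Fin.last l.length))⁻¹

/-!
A covering path family is determined by its set of crossings, and every subset occurs, which gives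
`2 ^ m`. The type of a family is the product of the generators at its crossings, so a family with a
non-crossing writes its type with fewer than `m` letters; for a reduced word of `v` this rules out
every family of type `v` except the all-crossings one, whose type is the product of the word.
-/

lemma adjT_inv {n : ℕ} (i : Fin n) : (adjT i)⁻¹ = adjT i :=
  Equiv.swap_inv _ _

lemma adjT_mul_ne_self {n : ℕ} (i : Fin n) (g : Equiv.Perm (Fin (n + 1))) : adjT i * g ≠ g := by
  rw [Ne, mul_eq_right, adjT, Equiv.swap_eq_one_iff]
  exact Fin.castSucc_lt_succ.ne

lemma wordProd_cons {n : ℕ} (i : Fin n) (w : List (Fin n)) :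
    wordProd (i :: w) = adjT i * wordProd w :=
  List.prod_cons

lemma wordProd_append {n : ℕ} (w w' : List (Fin n)) :
    wordProd (w ++ w') = wordProd w * wordProd w' := by
  simp [wordProd]

lemma wordProd_reverse {n : ℕ} (w : List (Fin n)) : wordProd w.reverse = (wordProd w)⁻¹ := by
  have : (fun x => x⁻¹) ∘ adjT = adjT (n := n) := funext adjT_inv
  simp [wordProd, List.prod_inv_reverse, List.map_reverse, this]

lemma len_wordProd_le {n : ℕ} (w : List (Fin n)) : len (wordProd w) ≤ w.length := by
  refine Nat.sInf_le ⟨w.map adjT, List.length_map _, ?_, rfl⟩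
  simp only [List.mem_map]
  rintro _ ⟨i, -, rfl⟩
  exact ⟨(i.castSucc, i.succ), rfl, rfl⟩

section

variable {n : ℕ} (l : List (Fin n))

def crossings (P : Fin (l.length + 1) → Equiv.Perm (Fin (n + 1))) : Fin l.length → Bool :=
  fun j => decide (P j.succ = adjT (l.get j) * P j.castSucc)

def crossFam (c : Fin l.length → Bool) : Fin (l.length + 1) → Equiv.Perm (Fin (n + 1)) :=
  Fin.induction 1 fun j g => if c j then adjT (l.get j) * g else g

variable {l}

@[simp] lemma crossFam_zero (c : Fin l.length → Bool) : crossFam l c 0 = 1 :=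
  Fin.induction_zero ..

lemma crossFam_succ (c : Fin l.length → Bool) (j : Fin l.length) :
    crossFam l c j.succ = if c j then adjT (l.get j) * crossFam l c j.castSucc
      else crossFam l c j.castSucc :=
  Fin.induction_succ ..

lemma pathFam_crossFam (c : Fin l.length → Bool) : PathFam l (crossFam l c) := by
  refine ⟨crossFam_zero c, fun j => ?_⟩
  rw [crossFam_succ]
  split_ifs <;> simp

lemma crossings_crossFam (c : Fin l.length → Bool) : crossings l (crossFam l c) = c := by
  funext j
  rw [crossings, crossFam_succ]
  cases c j <;> simp [(adjT_mul_ne_self _ _).symm]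

lemma crossFam_true_apply (k : Fin (l.length + 1)) :
    crossFam l (fun _ => true) k = wordProd (l.take k).reverse := by
  induction k using Fin.induction with
  | zero => simp [wordProd]
  | succ j ih =>
    rw [crossFam_succ, if_pos rfl, ih, Fin.val_succ, List.take_succ_eq_append_getElem j.isLt,
      List.reverse_append, Fin.val_castSucc]
    rfl

lemma famType_crossFam_true : famType l (crossFam l fun _ => true) = wordProd l := by
  rw [famType, crossFam_true_apply, wordProd_reverse, inv_inv, Fin.val_last, List.take_length]

namespace PathFam

variable {P : Fin (l.length + 1) → Equiv.Perm (Fin (n + 1))}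

lemma crossFam_crossings (hP : PathFam l P) : crossFam l (crossings l P) = P := by
  funext k
  induction k using Fin.induction with
  | zero => rw [crossFam_zero, hP.1]
  | succ j ih =>
    rw [crossFam_succ, ih, crossings]
    by_cases h : P j.succ = adjT (l.get j) * P j.castSucc
    · simp [h]
    · simp [(hP.2 j).resolve_left h]

lemma exists_wordProd_mul (hP : PathFam l P) {i k : Fin (l.length + 1)} (hik : i ≤ k) :
    ∃ w : List (Fin n), w.length ≤ k - i ∧ P k = wordProd w * P i := by
  induction k using Fin.induction with
  | zero => exact ⟨[], by simp, by simp [Fin.le_zero_iff.mp hik, wordProd]⟩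
  | succ j ih =>
    rcases hik.eq_or_lt with rfl | hlt
    · exact ⟨[], by simp, by simp [wordProd]⟩
    obtain ⟨w, hlen, hw⟩ := ih (Fin.le_castSucc_iff.mpr hlt)
    have hij : (i : ℕ) ≤ j := Fin.le_castSucc_iff.mpr hlt
    rcases hP.2 j with h | h
    · refine ⟨l.get j :: w, ?_, by rw [h, hw, wordProd_cons, mul_assoc]⟩
      simp only [List.length_cons, Fin.val_succ, Fin.val_castSucc] at hlen ⊢
      omega
    · refine ⟨w, ?_, by rw [h, hw]⟩
      simp only [Fin.val_succ, Fin.val_castSucc] at hlen ⊢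
      omega

lemma len_famType_lt (hP : PathFam l P) (j : Fin l.length) (hj : P j.succ = P j.castSucc) :
    len (famType l P) < l.length := by
  obtain ⟨w, hw, hPj⟩ := hP.exists_wordProd_mul (Fin.zero_le j.castSucc)
  obtain ⟨w', hw', hPlast⟩ := hP.exists_wordProd_mul (Fin.le_last j.succ)
  have : famType l P = wordProd (w' ++ w).reverse := by
    rw [famType, hPlast, hj, hPj, hP.1, mul_one, wordProd_reverse, wordProd_append]
  rw [this]
  refine (len_wordProd_le _).trans_lt ?_
  simp only [List.length_reverse, List.length_append, Fin.val_last, Fin.val_succ,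
    Fin.val_castSucc, Fin.val_zero] at hw hw' ⊢
  omega

end PathFam

def pathFamEquiv : {P // PathFam l P} ≃ (Fin l.length → Bool) where
  toFun P := crossings l P
  invFun c := ⟨crossFam l c, pathFam_crossFam c⟩
  left_inv P := Subtype.ext P.2.crossFam_crossings
  right_inv := crossings_crossFam

end

/-- The wiring diagram of `s_{i₁}⋯s_{i_m}` is covered by exactly `2^m` path
families; and if the word is reduced with product `v`, there is a unique covering
family of type `v`, namely the all-crossings one. -/
theorem pathFam_count_and_unique {n : ℕ} (l : List (Fin n))
    (v : Equiv.Perm (Fin (n + 1))) :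
    (Finset.univ.filter fun P : Fin (l.length + 1) → Equiv.Perm (Fin (n + 1)) =>
        PathFam l P).card = 2 ^ l.length ∧
    (IsRedWord l v →
      (∃! P : Fin (l.length + 1) → Equiv.Perm (Fin (n + 1)),
        PathFam l P ∧ famType l P = v) ∧
      ∀ P : Fin (l.length + 1) → Equiv.Perm (Fin (n + 1)),
        PathFam l P → famType l P = v →
          ∀ j : Fin l.length, P j.succ = adjT (l.get j) * P j.castSucc) := by
  refine ⟨?_, fun ⟨hprod, hlen⟩ => ?_⟩
  · rw [← Fintype.card_subtype, Fintype.card_congr pathFamEquiv]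
    simp
  have all_cross : ∀ P, PathFam l P → famType l P = v →
      ∀ j : Fin l.length, P j.succ = adjT (l.get j) * P j.castSucc :=
    fun P hP hv j => (hP.2 j).resolve_right fun h =>
      (hP.len_famType_lt j h).ne (by rw [hv, hlen])
  refine ⟨⟨crossFam l fun _ => true, ⟨pathFam_crossFam _, by rw [famType_crossFam_true, hprod]⟩,
    fun P ⟨hP, hv⟩ => ?_⟩, all_cross⟩
  rw [← hP.crossFam_crossings]
  congr
  funext j
  simpa [crossings] using all_cross P hP hv j
end
end
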